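/- Let R be an associative ring, G a groupoid, and α = (D_g, α_g)_{g∈G} a partial action of G on R such that D_g is s-unital for every g ∈ G and R = ⊕_{e∈G₀} D_e. Then the map Ψ, sending a G-invariant ideal J of R to J ⋊_{α^J} G, is a bijection from the set of G-invariant ideals of R onto the set of G-graded ideals of R ⋊_α G, with inverse given by I ↦ P₀(I). In particular, there is a one-to-one correspondence between G-graded ideals of R ⋊_α G and G-invariant ideals of R. -/

import Mathlib

open scoped Classical

/-- A (discrete) groupoid, presented as its set of morphisms `G`, with source map `s`,
range map `r`, inversion `inv` and a partially defined multiplication `mul`.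
The units (identity morphisms, i.e. the objects) are the elements `e` with `r e = e`. -/
structure DGroupoid (G : Type*) where
  s : G → G
  r : G → G
  inv : G → G
  mul : (g h : G) → s g = r h → G
  s_inv : ∀ g, s (inv g) = r g
  r_inv : ∀ g, r (inv g) = s g
  inv_inv : ∀ g, inv (inv g) = g
  r_mul : ∀ g h (p : s g = r h), r (mul g h p) = r g
  s_mul : ∀ g h (p : s g = r h), s (mul g h p) = s h
  r_idem : ∀ g, r (r g) = r g
  s_of_r : ∀ g, s (r g) = r g
  r_of_s : ∀ g, r (s g) = s g
  s_idem : ∀ g, s (s g) = s g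
  assoc : ∀ g h k (p : s g = r h) (q : s h = r k) (pq : s (mul g h p) = r k)
      (qp : s g = r (mul h k q)), mul (mul g h p) k pq = mul g (mul h k q) qp
  id_mul : ∀ g (p : s (r g) = r g), mul (r g) g p = g
  mul_id : ∀ g (p : s g = r (s g)), mul g (s g) p = g
  mul_inv : ∀ g (p : s g = r (inv g)), mul g (inv g) p = r g
  inv_mul : ∀ g (p : s (inv g) = r g), mul (inv g) g p = s g

namespace DGroupoid

/-- `e` is a unit (an object, identified with its identity morphism) of the groupoid. -/
def unit {G : Type*} (𝔾 : DGroupoid G) (e : G) : Prop := 𝔾.r e = e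

end DGroupoid

section RingDefs

variable {R : Type*} [NonUnitalRing R]

/-- A subset of a (possibly non-unital) ring is a two-sided ideal. -/
def IsRingIdeal (J : Set R) : Prop :=
  (0 : R) ∈ J ∧ (∀ x ∈ J, ∀ y ∈ J, x + y ∈ J) ∧ (∀ x ∈ J, -x ∈ J) ∧
    ∀ x ∈ J, ∀ y : R, x * y ∈ J ∧ y * x ∈ J

/-- A subset of a ring, viewed as a ring, is s-unital: every `x` in it lies in
`xT ∩ Tx`. -/
def IsSUnitalSet (J : Set R) : Prop :=
  ∀ x ∈ J, (∃ u ∈ J, x * u = x) ∧ (∃ v ∈ J, v * x = x)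

end RingDefs

/-- A partial action `α = (D_g, α_g)_{g ∈ G}` of a groupoid `𝔾` on a
(possibly non-unital, associative) ring `R`:  each `D_{r g}` is a two-sided ideal of `R`,
each `D_g` is a two-sided ideal of `D_{r g}`, and `α_g = act g` restricts to a ring
isomorphism `D_{g⁻¹} → D_g` (the function `act g` is arbitrary outside `D_{g⁻¹}`),
satisfying the axioms of a partial action. -/
structure PartialAction {G : Type*} (𝔾 : DGroupoid G) (R : Type*) [NonUnitalRing R] where
  D : G → Set R
  zero_mem : ∀ g, (0 : R) ∈ D g
  add_mem : ∀ g, ∀ x ∈ D g, ∀ y ∈ D g, x + y ∈ D g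
  neg_mem : ∀ g, ∀ x ∈ D g, -x ∈ D g
  subset_r : ∀ g, D g ⊆ D (𝔾.r g)
  idealR : ∀ g, IsRingIdeal (D (𝔾.r g))
  idealInR : ∀ g, ∀ x ∈ D g, ∀ y ∈ D (𝔾.r g), x * y ∈ D g ∧ y * x ∈ D g
  act : G → R → R
  act_mem : ∀ g, ∀ x ∈ D (𝔾.inv g), act g x ∈ D g
  act_add : ∀ g, ∀ x ∈ D (𝔾.inv g), ∀ y ∈ D (𝔾.inv g), act g (x + y) = act g x + act g y
  act_mul : ∀ g, ∀ x ∈ D (𝔾.inv g), ∀ y ∈ D (𝔾.inv g), act g (x * y) = act g x * act g y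
  act_inv : ∀ g, ∀ x ∈ D (𝔾.inv g), act (𝔾.inv g) (act g x) = x
  act_unit : ∀ e, 𝔾.unit e → ∀ x ∈ D e, act e x = x
  act_comp_mem : ∀ g h (p : 𝔾.s g = 𝔾.r h), ∀ x, x ∈ D (𝔾.inv g) → x ∈ D h →
      act (𝔾.inv h) x ∈ D (𝔾.inv (𝔾.mul g h p))
  act_comp : ∀ g h (p : 𝔾.s g = 𝔾.r h), ∀ x ∈ D (𝔾.inv h), act h x ∈ D (𝔾.inv g) →
      act g (act h x) = act (𝔾.mul g h p) x

namespace PartialAction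

variable {G : Type*} {R : Type*} [NonUnitalRing R] {𝔾 : DGroupoid G} (P : PartialAction 𝔾 R)

/-- `R = ⊕_{e ∈ G₀} D_e`: every element of `R` decomposes as a finite sum of elements
of the `D_e` (`e` a unit), and the decomposition is unique (a finite sum of elements of
the distinct `D_e`'s which vanishes has all terms zero). -/
def directSum : Prop :=
  (∀ x : R, ∃ f : G →₀ R, (∀ g ∈ f.support, 𝔾.unit g) ∧ (∀ g, f g ∈ P.D g) ∧
      (f.sum fun _ v => v) = x) ∧
    ∀ f : G →₀ R, (∀ g ∈ f.support, 𝔾.unit g) → (∀ g, f g ∈ P.D g) →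
      (f.sum fun _ v => v) = 0 → f = 0

/-- The carrier of the partial skew groupoid ring `R ⋊_α G`: finitely supported
functions `a : G →₀ R` (thought of as `Σ_g a_g δ_g`) with `a g ∈ D g`. -/
def carrier : Set (G →₀ R) := {a | ∀ g, a g ∈ P.D g}

/-- The multiplication of the partial skew groupoid ring:
`(a_g δ_g)(b_h δ_h) = α_g(α_{g⁻¹}(a_g) b_h) δ_{gh}` when `(g,h)` is composable,
and `0` otherwise. -/
noncomputable def skewMul (a b : G →₀ R) : G →₀ R :=
  a.support.sum fun g => b.support.sum fun h =>
    if p : 𝔾.s g = 𝔾.r h then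
      Finsupp.single (𝔾.mul g h p) (P.act g (P.act (𝔾.inv g) (a g) * b h))
    else 0

/-- The subset `⊕_{e ∈ G₀} D_e δ_e` of `R ⋊_α G`: elements supported on units. -/
def diag : Set (G →₀ R) := {a | (∀ g, a g ∈ P.D g) ∧ ∀ g ∈ a.support, 𝔾.unit g}

/-- `I` is a two-sided ideal of the partial skew groupoid ring `R ⋊_α G`. -/
def IsSkewIdeal (I : Set (G →₀ R)) : Prop :=
  I ⊆ P.carrier ∧ (0 : G →₀ R) ∈ I ∧ (∀ x ∈ I, ∀ y ∈ I, x + y ∈ I) ∧ (∀ x ∈ I, -x ∈ I) ∧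
    ∀ x ∈ I, ∀ y ∈ P.carrier, P.skewMul x y ∈ I ∧ P.skewMul y x ∈ I

/-- The projection `P₀ : R ⋊_α G → R`, `Σ_g a_g δ_g ↦ Σ_{e ∈ G₀} a_e`. -/
noncomputable def P0 (_P : PartialAction 𝔾 R) (a : G →₀ R) : R :=
  a.sum fun g v => if 𝔾.unit g then v else 0

/-- An ideal `I` of `R ⋊_α G` is `G`-graded if it is generated by its homogeneous
components, i.e. `I = ⊕_g (I ∩ D_g δ_g)`. -/
def IsGradedIdeal (I : Set (G →₀ R)) : Prop :=
  P.IsSkewIdeal I ∧ ∀ a ∈ I, ∀ g : G, Finsupp.single g (a g) ∈ I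

/-- `J` is a `G`-invariant (two-sided) ideal of `R`: `α_g(D_{g⁻¹} ∩ J) ⊆ J`. -/
def IsInvIdeal (J : Set R) : Prop :=
  IsRingIdeal J ∧ ∀ g, ∀ x ∈ P.D (𝔾.inv g) ∩ J, P.act g x ∈ J

/-- The subset `J ⋊_{α^J} G = ⊕_g (J ∩ D_g) δ_g` of `R ⋊_α G` attached to a
`G`-invariant ideal `J` of `R`. -/
def skewOf (J : Set R) : Set (G →₀ R) := {a | ∀ g, a g ∈ P.D g ∩ J}

/-- `⊕_{e ∈ G₀} D_e δ_e` is a maximal commutative subring of `R ⋊_α G`: it is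
commutative and coincides with its centralizer. -/
def IsMaxCommDiag : Prop :=
  (∀ a ∈ P.diag, ∀ b ∈ P.diag, P.skewMul a b = P.skewMul b a) ∧
    ∀ b ∈ P.carrier, (∀ a ∈ P.diag, P.skewMul a b = P.skewMul b a) → b ∈ P.diag

/-- The partial action has the intersection property: every nonzero ideal of
`R ⋊_α G` intersects `⊕_{e ∈ G₀} D_e δ_e` nontrivially. -/
def HasIntersectionProperty : Prop :=
  ∀ I : Set (G →₀ R), P.IsSkewIdeal I → I ≠ {0} → I ∩ P.diag ≠ {0}

/-- `R` is `G`-simple: the only `G`-invariant ideals of `R` are `{0}` and `R`. -/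
def GSimple : Prop := ∀ J : Set R, P.IsInvIdeal J → J = {0} ∨ J = Set.univ

/-- `R` is `G`-prime: if `I, J` are `G`-invariant ideals with `IJ = {0}`, then
`I = {0}` or `J = {0}`. -/
def GPrime : Prop :=
  ∀ I J : Set R, P.IsInvIdeal I → P.IsInvIdeal J →
    (∀ x ∈ I, ∀ y ∈ J, x * y = 0) → I = {0} ∨ J = {0}

/-- `R ⋊_α G` is graded simple. -/
def GradedSimple : Prop :=
  ∀ I : Set (G →₀ R), P.IsGradedIdeal I → I = {0} ∨ I = P.carrier

/-- `R ⋊_α G` is graded prime. -/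
def GradedPrime : Prop :=
  ∀ I J : Set (G →₀ R), P.IsGradedIdeal I → P.IsGradedIdeal J →
    (∀ x ∈ I, ∀ y ∈ J, P.skewMul x y = 0) → I = {0} ∨ J = {0}

/-- `R ⋊_α G` is a prime ring. -/
def SkewPrime : Prop :=
  ∀ I J : Set (G →₀ R), P.IsSkewIdeal I → P.IsSkewIdeal J →
    (∀ x ∈ I, ∀ y ∈ J, P.skewMul x y = 0) → I = {0} ∨ J = {0}

/-- `R ⋊_α G` is a simple ring. -/
def SkewSimple : Prop :=
  ∀ I : Set (G →₀ R), P.IsSkewIdeal I → I = {0} ∨ I = P.carrier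

end PartialAction

/-!
For a graded ideal `I` and `c ∈ D_g`, one has `c ∈ P₀(I)` iff `c δ_g ∈ I`. Indeed, multiplying by
`δ`-terms carrying local units (s-unitality) moves `c δ_g` to `c δ_{r(g)}` and back, and since
`R = ⊕_e D_e`, an element `a` with `P₀(a) = c ∈ D_e` has `a_e = c`. This identity gives
`P₀(I) ⋊ G = I` at once, and `P₀(I)` inherits being an invariant ideal from `I` through the
products `(c δ_e)(y δ_e) = cy δ_e` and `(α_g(u) δ_g)(x δ_{s(g)}) = α_g(ux) δ_g`.
Conversely, if `J` is an invariant ideal, the `D_e`-component of `x ∈ J` equals `x u` for a local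
unit `u`, so it lies in `J`, whence `P₀(J ⋊ G) = J`.
-/

theorem DGroupoid.mul_congr {G : Type*} (𝔾 : DGroupoid G) {g g' h h' : G} (hg : g = g')
    (hh : h = h') (p : 𝔾.s g = 𝔾.r h) (p' : 𝔾.s g' = 𝔾.r h') :
    𝔾.mul g h p = 𝔾.mul g' h' p' := by
  subst hg hh; rfl

theorem DGroupoid.unit_s {G : Type*} (𝔾 : DGroupoid G) {e : G} (he : 𝔾.unit e) :
    𝔾.s e = e := by
  have h := 𝔾.s_of_r e
  rwa [he] at h

theorem DGroupoid.unit_inv {G : Type*} (𝔾 : DGroupoid G) {e : G} (he : 𝔾.unit e) :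
    𝔾.inv e = e := by
  have hre : 𝔾.r (𝔾.inv e) = e := by rw [𝔾.r_inv, 𝔾.unit_s he]
  have p : 𝔾.s e = 𝔾.r (𝔾.inv e) := by rw [hre, 𝔾.unit_s he]
  calc 𝔾.inv e = 𝔾.mul (𝔾.r (𝔾.inv e)) (𝔾.inv e) (𝔾.s_of_r _) := (𝔾.id_mul _ _).symm
    _ = 𝔾.mul e (𝔾.inv e) p := 𝔾.mul_congr hre rfl _ _
    _ = e := (𝔾.mul_inv e p).trans he

theorem sum_mem_of_add_mem {ι M : Type*} [AddCommMonoid M] {K : Set M} (h0 : (0 : M) ∈ K)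
    (hadd : ∀ x ∈ K, ∀ y ∈ K, x + y ∈ K) (s : Finset ι) {f : ι → M} (hf : ∀ i ∈ s, f i ∈ K) :
    ∑ i ∈ s, f i ∈ K :=
  Finset.sum_induction _ (· ∈ K) (fun x y hx hy => hadd x hx y hy) h0 hf

namespace PartialAction

variable {G R : Type*} [NonUnitalRing R] {𝔾 : DGroupoid G} (P : PartialAction 𝔾 R)

theorem act_zero (g : G) : P.act g 0 = 0 := by
  have h := P.act_add g 0 (P.zero_mem _) 0 (P.zero_mem _)
  rwa [add_zero, left_eq_add] at h

theorem act_inv_mem {g : G} {x : R} (hx : x ∈ P.D g) : P.act (𝔾.inv g) x ∈ P.D (𝔾.inv g) :=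
  P.act_mem (𝔾.inv g) x (by rwa [𝔾.inv_inv])

theorem act_act_inv {g : G} {x : R} (hx : x ∈ P.D g) : P.act g (P.act (𝔾.inv g) x) = x := by
  simpa only [𝔾.inv_inv] using P.act_inv (𝔾.inv g) x (by rwa [𝔾.inv_inv])

theorem sub_mem {g : G} {x y : R} (hx : x ∈ P.D g) (hy : y ∈ P.D g) : x - y ∈ P.D g := by
  rw [sub_eq_add_neg]
  exact P.add_mem g x hx _ (P.neg_mem g y hy)

-- An s-unital ideal of the ideal `D (r g)` is an ideal of `R`.

theorem mul_mem_right {g : G} (hsu : IsSUnitalSet (P.D g)) {x : R} (hx : x ∈ P.D g) (y : R) :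
    x * y ∈ P.D g := by
  obtain ⟨v, hv, hvx⟩ := (hsu x hx).2
  have hxy : x * y ∈ P.D (𝔾.r g) := ((P.idealR g).2.2.2 x (P.subset_r g hx) y).1
  simpa only [← mul_assoc, hvx] using (P.idealInR g v hv _ hxy).1

theorem mul_mem_left {g : G} (hsu : IsSUnitalSet (P.D g)) {x : R} (hx : x ∈ P.D g) (y : R) :
    y * x ∈ P.D g := by
  obtain ⟨u, hu, hxu⟩ := (hsu x hx).1
  have hyx : y * x ∈ P.D (𝔾.r g) := ((P.idealR g).2.2.2 x (P.subset_r g hx) y).2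
  simpa only [mul_assoc, hxu] using (P.idealInR g u hu _ hyx).2

theorem act_mul_mem (hsu : ∀ g, IsSUnitalSet (P.D g)) {g h : G} (p : 𝔾.s g = 𝔾.r h)
    {a b : R} (ha : a ∈ P.D g) (hb : b ∈ P.D h) :
    P.act g (P.act (𝔾.inv g) a * b) ∈ P.D (𝔾.mul g h p) := by
  set x := P.act (𝔾.inv g) a * b
  have hxg : x ∈ P.D (𝔾.inv g) := P.mul_mem_right (hsu _) (P.act_inv_mem ha) b
  have hxh : x ∈ P.D h := P.mul_mem_left (hsu h) hb _
  have hx : P.act h (P.act (𝔾.inv h) x) = x := P.act_act_inv hxh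
  have hcomp := P.act_comp g h p _ (P.act_inv_mem hxh) (by rwa [hx])
  rw [hx] at hcomp
  rw [hcomp]
  exact P.act_mem _ _ (P.act_comp_mem g h p x hxg hxh)

theorem act_mul_mem_of_isInvIdeal (hsu : ∀ g, IsSUnitalSet (P.D g)) {J : Set R}
    (hJ : P.IsInvIdeal J) (g : G) {a b : R} (ha : a ∈ P.D g) (hab : a ∈ J ∨ b ∈ J) :
    P.act g (P.act (𝔾.inv g) a * b) ∈ J := by
  have hxg : P.act (𝔾.inv g) a * b ∈ P.D (𝔾.inv g) :=
    P.mul_mem_right (hsu _) (P.act_inv_mem ha) b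
  refine hJ.2 g _ ⟨hxg, ?_⟩
  rcases hab with haJ | hbJ
  · exact (hJ.1.2.2.2 _ (hJ.2 (𝔾.inv g) a ⟨by rwa [𝔾.inv_inv], haJ⟩) b).1
  · exact (hJ.1.2.2.2 _ hbJ _).2

theorem single_mem_carrier {g : G} {c : R} (hc : c ∈ P.D g) :
    Finsupp.single g c ∈ P.carrier := by
  intro k
  rw [Finsupp.single_apply]
  split_ifs with h
  · exact h ▸ hc
  · exact P.zero_mem k

theorem skewMul_apply_mem {K : G → Set R} (hK0 : ∀ k, (0 : R) ∈ K k)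
    (hKadd : ∀ k, ∀ x ∈ K k, ∀ y ∈ K k, x + y ∈ K k) (a b : G →₀ R)
    (hterm : ∀ g h (p : 𝔾.s g = 𝔾.r h),
      P.act g (P.act (𝔾.inv g) (a g) * b h) ∈ K (𝔾.mul g h p))
    (k : G) : P.skewMul a b k ∈ K k := by
  rw [skewMul, Finsupp.finsetSum_apply]
  refine sum_mem_of_add_mem (hK0 k) (hKadd k) _ fun g _ => ?_
  rw [Finsupp.finsetSum_apply]
  refine sum_mem_of_add_mem (hK0 k) (hKadd k) _ fun h _ => ?_
  split_ifs with p
  · rw [Finsupp.single_apply]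
    split_ifs with hk
    · exact hk ▸ hterm g h p
    · exact hK0 k
  · exact hK0 k

theorem skewMul_single_single (g h : G) (u v : R) :
    P.skewMul (Finsupp.single g u) (Finsupp.single h v) =
      if p : 𝔾.s g = 𝔾.r h then
        Finsupp.single (𝔾.mul g h p) (P.act g (P.act (𝔾.inv g) u * v)) else 0 := by
  by_cases hu : u = 0
  · simp [skewMul, hu, P.act_zero]
  by_cases hv : v = 0
  · simp [skewMul, hv, P.act_zero]
  rw [skewMul, Finsupp.support_single _ hu, Finsupp.support_single _ hv,
    Finset.sum_singleton, Finset.sum_singleton, Finsupp.single_eq_same, Finsupp.single_eq_same]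

theorem skewMul_single_range {g e : G} (he : 𝔾.r g = e) {c : R} (hc : c ∈ P.D e) (u : R) :
    P.skewMul (Finsupp.single e c) (Finsupp.single g u) = Finsupp.single g (c * u) := by
  subst he
  have hunit : 𝔾.unit (𝔾.r g) := 𝔾.r_idem g
  have hcu : c * u ∈ P.D (𝔾.r g) := ((P.idealR g).2.2.2 c hc u).1
  rw [P.skewMul_single_single, dif_pos (𝔾.s_of_r g), 𝔾.id_mul, 𝔾.unit_inv hunit,
    P.act_unit _ hunit c hc, P.act_unit _ hunit _ hcu]

theorem P0_single (g : G) (x : R) :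
    P.P0 (Finsupp.single g x) = if 𝔾.unit g then x else 0 :=
  Finsupp.sum_single_index (by split_ifs <;> rfl)

theorem P0_zero : P.P0 (0 : G →₀ R) = 0 := Finsupp.sum_zero_index

theorem P0_add (a b : G →₀ R) : P.P0 (a + b) = P.P0 a + P.P0 b :=
  Finsupp.sum_add_index' (fun _ => by split_ifs <;> rfl) (fun _ _ _ => by split_ifs <;> simp)

theorem P0_neg (a : G →₀ R) : P.P0 (-a) = -P.P0 a := by
  have h := P.P0_add a (-a)
  rw [add_neg_cancel, P0_zero] at h
  exact eq_neg_of_add_eq_zero_right h.symm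

theorem P0_eq_sum_filter (a : G →₀ R) :
    P.P0 a = (a.filter fun g => 𝔾.unit g).sum fun _ v => v := by
  rw [Finsupp.sum, Finsupp.support_filter, Finset.sum_filter, P0, Finsupp.sum]
  refine Finset.sum_congr rfl fun g _ => ?_
  split_ifs with h
  · rw [Finsupp.filter_apply_pos _ _ h]
  · rfl

theorem P0_mem {K : Set R} (h0 : (0 : R) ∈ K) (hadd : ∀ x ∈ K, ∀ y ∈ K, x + y ∈ K)
    {a : G →₀ R} (ha : ∀ g, a g ∈ K) : P.P0 a ∈ K := by
  refine sum_mem_of_add_mem h0 hadd _ fun g _ => ?_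
  dsimp only
  split_ifs
  · exact ha g
  · exact h0

section DirectSum

variable {P} (hds : P.directSum)
include hds

theorem directSum.eq_of_sum_eq {f f' : G →₀ R} (hfu : ∀ g ∈ f.support, 𝔾.unit g)
    (hf'u : ∀ g ∈ f'.support, 𝔾.unit g) (hfD : ∀ g, f g ∈ P.D g) (hf'D : ∀ g, f' g ∈ P.D g)
    (hsum : (f.sum fun _ v => v) = f'.sum fun _ v => v) : f = f' := by
  refine sub_eq_zero.mp (hds.2 _ (fun g hg => ?_) (fun g => P.sub_mem (hfD g) (hf'D g)) ?_)
  · rcases Finset.mem_union.mp (Finsupp.support_sub hg) with h | h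
    exacts [hfu g h, hf'u g h]
  · rw [Finsupp.sum_sub_index fun _ _ _ => rfl, hsum, sub_self]

theorem directSum.eq_zero_of_mem_of_mem {e e' : G} (he : 𝔾.unit e) (he' : 𝔾.unit e')
    (hne : e ≠ e') {x : R} (hx : x ∈ P.D e) (hx' : x ∈ P.D e') : x = 0 := by
  have hsupp {d : G} (hd : 𝔾.unit d) : ∀ g ∈ (Finsupp.single d x).support, 𝔾.unit g :=
    fun g hg => Finset.mem_singleton.mp (Finsupp.support_single_subset hg) ▸ hd
  have h := hds.eq_of_sum_eq (hsupp he) (hsupp he') (fun _ => (P.single_mem_carrier hx) _)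
    (fun _ => (P.single_mem_carrier hx') _)
    (by rw [Finsupp.sum_single_index rfl, Finsupp.sum_single_index rfl])
  simpa [Finsupp.single_eq_of_ne' hne.symm] using DFunLike.congr_fun h e

theorem directSum.apply_eq_of_P0_eq {b : G →₀ R} (hb : b ∈ P.carrier) {e : G}
    (he : 𝔾.unit e) {x : R} (hx : x ∈ P.D e) (hP0 : P.P0 b = x) : b e = x := by
  have h := hds.eq_of_sum_eq (f := b.filter fun g : G => 𝔾.unit g) (f' := Finsupp.single e x)
    (fun g hg => by rw [Finsupp.support_filter] at hg; exact (Finset.mem_filter.mp hg).2)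
    (fun g hg => Finset.mem_singleton.mp (Finsupp.support_single_subset hg) ▸ he)
    (fun g => by
      rw [Finsupp.filter_apply]
      split_ifs
      exacts [hb g, P.zero_mem g])
    (fun _ => (P.single_mem_carrier hx) _)
    (by rw [← P0_eq_sum_filter, hP0, Finsupp.sum_single_index rfl])
  simpa [Finsupp.filter_apply_pos _ _ he] using DFunLike.congr_fun h e

/-- Take for `u` a local right unit of `f g`: it kills the other components, as
`D_{e'} D_e ⊆ D_{e'} ∩ D_e = 0`. -/
theorem directSum.exists_mul_eq_apply (hsu : ∀ g, IsSUnitalSet (P.D g)) {f : G →₀ R}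
    (hfu : ∀ g ∈ f.support, 𝔾.unit g) (hfD : ∀ g, f g ∈ P.D g) (g : G) :
    ∃ u, (f.sum fun _ v => v) * u = f g := by
  by_cases hg : g ∈ f.support
  · obtain ⟨u, hu, hfgu⟩ := (hsu g (f g) (hfD g)).1
    refine ⟨u, ?_⟩
    rw [Finsupp.sum, Finset.sum_mul, Finset.sum_eq_single g _ (absurd hg), hfgu]
    exact fun g' hg' hne => hds.eq_zero_of_mem_of_mem (hfu g' hg') (hfu g hg) hne
      (P.mul_mem_right (hsu g') (hfD g') u) (P.mul_mem_left (hsu g) hu (f g'))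
  · exact ⟨0, by rw [mul_zero, Finsupp.notMem_support_iff.mp hg]⟩

end DirectSum

theorem IsSkewIdeal.sum_mem {P : PartialAction 𝔾 R} {I : Set (G →₀ R)} (hI : P.IsSkewIdeal I)
    {ι : Type*} (s : Finset ι) {a : ι → G →₀ R} (ha : ∀ i ∈ s, a i ∈ I) : ∑ i ∈ s, a i ∈ I :=
  sum_mem_of_add_mem hI.2.1 hI.2.2.1 s ha

theorem IsSkewIdeal.skewMul_mem_right {P : PartialAction 𝔾 R} {I : Set (G →₀ R)}
    (hI : P.IsSkewIdeal I) {a b : G →₀ R} (ha : a ∈ I) (hb : b ∈ P.carrier) :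
    P.skewMul a b ∈ I :=
  (hI.2.2.2.2 a ha b hb).1

theorem IsSkewIdeal.skewMul_mem_left {P : PartialAction 𝔾 R} {I : Set (G →₀ R)}
    (hI : P.IsSkewIdeal I) {a b : G →₀ R} (ha : a ∈ I) (hb : b ∈ P.carrier) :
    P.skewMul b a ∈ I :=
  (hI.2.2.2.2 a ha b hb).2

theorem isGradedIdeal_skewOf (hsu : ∀ g, IsSUnitalSet (P.D g)) {J : Set R}
    (hJ : P.IsInvIdeal J) : P.IsGradedIdeal (P.skewOf J) := by
  have hK0 : ∀ k, (0 : R) ∈ P.D k ∩ J := fun k => ⟨P.zero_mem k, hJ.1.1⟩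
  have hKadd : ∀ k, ∀ x ∈ P.D k ∩ J, ∀ y ∈ P.D k ∩ J, x + y ∈ P.D k ∩ J :=
    fun k x hx y hy => ⟨P.add_mem k x hx.1 y hy.1, hJ.1.2.1 x hx.2 y hy.2⟩
  have hmul {a b : G →₀ R} (ha : a ∈ P.carrier) (hb : b ∈ P.carrier)
      (hab : ∀ g h, a g ∈ J ∨ b h ∈ J) : P.skewMul a b ∈ P.skewOf J :=
    P.skewMul_apply_mem hK0 hKadd a b fun g h p =>
      ⟨P.act_mul_mem hsu p (ha g) (hb h), P.act_mul_mem_of_isInvIdeal hsu hJ g (ha g) (hab g h)⟩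
  refine ⟨⟨fun a ha g => (ha g).1, hK0,
    fun x hx y hy g => hKadd g _ (hx g) _ (hy g),
    fun x hx g => ⟨P.neg_mem g _ (hx g).1, hJ.1.2.2.1 _ (hx g).2⟩,
    fun x hx y hy => ⟨hmul (fun g => (hx g).1) hy fun g _ => .inl (hx g).2,
      hmul hy (fun g => (hx g).1) fun _ h => .inr (hx h).2⟩⟩, fun a ha g k => ?_⟩
  rw [Finsupp.single_apply]
  split_ifs with h
  · exact h ▸ ha g
  · exact hK0 k

theorem image_P0_skewOf (hsu : ∀ g, IsSUnitalSet (P.D g)) (hds : P.directSum) {J : Set R}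
    (hJ : P.IsInvIdeal J) : P.P0 '' P.skewOf J = J := by
  ext x
  constructor
  · rintro ⟨a, ha, rfl⟩
    exact P.P0_mem hJ.1.1 hJ.1.2.1 fun g => (ha g).2
  · intro hx
    obtain ⟨f, hfu, hfD, rfl⟩ := hds.1 x
    refine ⟨f, fun g => ⟨hfD g, ?_⟩, Finset.sum_congr rfl fun g hg => if_pos (hfu g hg)⟩
    obtain ⟨u, hu⟩ := hds.exists_mul_eq_apply hsu hfu hfD g
    exact hu ▸ (hJ.1.2.2.2 _ hx u).1

section GradedIdeal

variable {P} (hsu : ∀ g, IsSUnitalSet (P.D g)) {I : Set (G →₀ R)} (hI : P.IsGradedIdeal I)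
include hsu hI

theorem IsGradedIdeal.single_mem_iff_single_range_mem {g : G} {c : R} (hc : c ∈ P.D g) :
    Finsupp.single g c ∈ I ↔ Finsupp.single (𝔾.r g) c ∈ I := by
  constructor
  · intro h
    obtain ⟨v, hv, hcv⟩ := (hsu _ _ (P.act_inv_mem hc)).1
    have p : 𝔾.s g = 𝔾.r (𝔾.inv g) := (𝔾.r_inv g).symm
    have hprod := hI.1.skewMul_mem_right h (P.single_mem_carrier hv)
    rwa [P.skewMul_single_single, dif_pos p, 𝔾.mul_inv, hcv, P.act_act_inv hc] at hprod
  · intro h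
    obtain ⟨u, hu, hcu⟩ := (hsu g c hc).1
    have hprod := hI.1.skewMul_mem_right h (P.single_mem_carrier hu)
    rwa [P.skewMul_single_range rfl (P.subset_r g hc) u, hcu] at hprod

theorem IsGradedIdeal.mem_image_P0_iff (hds : P.directSum) {g : G} {c : R} (hc : c ∈ P.D g) :
    c ∈ P.P0 '' I ↔ Finsupp.single g c ∈ I := by
  have hunit : 𝔾.unit (𝔾.r g) := 𝔾.r_idem g
  rw [hI.single_mem_iff_single_range_mem hsu hc]
  constructor
  · rintro ⟨b, hb, hbc⟩
    rw [← hds.apply_eq_of_P0_eq (hI.1.1 hb) hunit (P.subset_r g hc) hbc]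
    exact hI.2 b hb _
  · exact fun h => ⟨_, h, by rw [P0_single, if_pos hunit]⟩

theorem IsGradedIdeal.mem_image_P0_of_mem (hds : P.directSum) {a : G →₀ R} (ha : a ∈ I)
    (g : G) : a g ∈ P.P0 '' I :=
  (hI.mem_image_P0_iff hsu hds (hI.1.1 ha g)).mpr (hI.2 a ha g)

theorem IsGradedIdeal.mul_mem_image_P0_of_unit (hds : P.directSum) {e : G} (he : 𝔾.unit e)
    {c : R} (hc : c ∈ P.D e) (hcI : c ∈ P.P0 '' I) (y : R) :
    c * y ∈ P.P0 '' I ∧ y * c ∈ P.P0 '' I := by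
  have hsingle := (hI.mem_image_P0_iff hsu hds hc).mp hcI
  obtain ⟨u, hu, hcyu⟩ := (hsu e _ (P.mul_mem_right (hsu e) hc y)).1
  obtain ⟨v, hv, hvyc⟩ := (hsu e _ (P.mul_mem_left (hsu e) hc y)).2
  have hyu := P.mul_mem_left (hsu e) hu y
  have hvy := P.mul_mem_right (hsu e) hv y
  constructor
  · rw [hI.mem_image_P0_iff hsu hds (P.mul_mem_right (hsu e) hc y), ← hcyu, mul_assoc,
      ← P.skewMul_single_range he hc (y * u)]
    exact hI.1.skewMul_mem_right hsingle (P.single_mem_carrier hyu)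
  · rw [hI.mem_image_P0_iff hsu hds (P.mul_mem_left (hsu e) hc y), ← hvyc, ← mul_assoc,
      ← P.skewMul_single_range he hvy c]
    exact hI.1.skewMul_mem_left hsingle (P.single_mem_carrier hvy)

theorem IsGradedIdeal.isRingIdeal_image_P0 (hds : P.directSum) : IsRingIdeal (P.P0 '' I) := by
  have hIs := hI.1
  have hadd : ∀ x ∈ P.P0 '' I, ∀ y ∈ P.P0 '' I, x + y ∈ P.P0 '' I := by
    rintro _ ⟨a, ha, rfl⟩ _ ⟨b, hb, rfl⟩
    exact ⟨a + b, hIs.2.2.1 a ha b hb, P.P0_add a b⟩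
  have h0 : (0 : R) ∈ P.P0 '' I := ⟨0, hIs.2.1, P.P0_zero⟩
  refine ⟨h0, hadd, ?_, ?_⟩
  · rintro _ ⟨a, ha, rfl⟩
    exact ⟨-a, hIs.2.2.2.1 a ha, P.P0_neg a⟩
  · rintro _ ⟨a, ha, rfl⟩ y
    have hterm (g : G) : (if 𝔾.unit g then a g else 0) * y ∈ P.P0 '' I ∧
        y * (if 𝔾.unit g then a g else 0) ∈ P.P0 '' I := by
      split_ifs with hg
      · exact hI.mul_mem_image_P0_of_unit hsu hds hg (hIs.1 ha g)
          (hI.mem_image_P0_of_mem hsu hds ha g) y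
      · simpa only [zero_mul, mul_zero, and_self] using h0
    rw [P0, Finsupp.sum, Finset.sum_mul, Finset.mul_sum]
    exact ⟨sum_mem_of_add_mem h0 hadd _ fun g _ => (hterm g).1,
      sum_mem_of_add_mem h0 hadd _ fun g _ => (hterm g).2⟩

theorem IsGradedIdeal.isInvIdeal_image_P0 (hds : P.directSum) : P.IsInvIdeal (P.P0 '' I) := by
  refine ⟨hI.isRingIdeal_image_P0 hsu hds, ?_⟩
  rintro g x ⟨hxD, hxI⟩
  have hxs : x ∈ P.D (𝔾.s g) := by simpa only [𝔾.r_inv] using P.subset_r _ hxD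
  have hsingle := (hI.mem_image_P0_iff hsu hds hxs).mp hxI
  obtain ⟨w, hw, hwx⟩ := (hsu _ x hxD).2
  have p : 𝔾.s g = 𝔾.r (𝔾.s g) := (𝔾.r_of_s g).symm
  have hprod := hI.1.skewMul_mem_left hsingle (P.single_mem_carrier (P.act_mem g w hw))
  rw [P.skewMul_single_single, dif_pos p, 𝔾.mul_id, P.act_inv g w hw, hwx] at hprod
  exact (hI.mem_image_P0_iff hsu hds (P.act_mem g x hxD)).mpr hprod

theorem IsGradedIdeal.skewOf_image_P0 (hds : P.directSum) : P.skewOf (P.P0 '' I) = I := by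
  ext a
  constructor
  · intro ha
    rw [← Finsupp.sum_single a]
    exact hI.1.sum_mem _ fun g _ => (hI.mem_image_P0_iff hsu hds (ha g).1).mp (ha g).2
  · exact fun ha g => ⟨hI.1.1 ha g, hI.mem_image_P0_of_mem hsu hds ha g⟩

end GradedIdeal

end PartialAction

/-- The map `Ψ : J ↦ J ⋊_{α^J} G` is a bijection from the set of
`G`-invariant ideals of `R` onto the set of `G`-graded ideals of `R ⋊_α G`, with
inverse `I ↦ P₀(I)`. -/
theorem invIdeal_gradedIdeal_correspondence {G R : Type*} [NonUnitalRing R]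
    (𝔾 : DGroupoid G) (P : PartialAction 𝔾 R)
    (hsu : ∀ g, IsSUnitalSet (P.D g)) (hds : P.directSum) :
    (∀ J : Set R, P.IsInvIdeal J → P.IsGradedIdeal (P.skewOf J)) ∧
    (∀ I : Set (G →₀ R), P.IsGradedIdeal I → P.IsInvIdeal (P.P0 '' I)) ∧
    (∀ J : Set R, P.IsInvIdeal J → P.P0 '' (P.skewOf J) = J) ∧
    (∀ I : Set (G →₀ R), P.IsGradedIdeal I → P.skewOf (P.P0 '' I) = I) :=
  ⟨fun _ hJ => P.isGradedIdeal_skewOf hsu hJ, fun _ hI => hI.isInvIdeal_image_P0 hsu hds,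
    fun _ hJ => P.image_P0_skewOf hsu hds hJ, fun _ hI => hI.skewOf_image_P0 hsu hds⟩
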